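/- arXiv:2506.16598 — 2 statements merged into one kernel-verified Lean document; each statement's English description precedes it below -/
import Mathlib

section
/- (Maximal Lifting Theorem.) Let n ≥ 1, let T be an n-periodic 2-triangulation on ℤ, and let e be an edge of length at most 2n with e ∉ T. Then T ∪ {e} contains a 3-crossing; that is, there exist edges f₁, f₂ ∈ T such that {e, f₁, f₂} is a set of three pairwise crossing edges. -/
/- Edges on the universal cover of the half-cylinder, modeled by the integers.
   An edge is an unordered pair of distinct integers, represented as an ordered
   pair `(a, b)` with `a < b` (validity). -/

namespace Multitriangulation

abbrev Edge := ℤ × ℤ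

/-- Translate an edge by `t`: `[a,b] + t = [a+t, b+t]`. -/
def shift (e : Edge) (t : ℤ) : Edge := (e.1 + t, e.2 + t)

/-- Two edges (as unordered pairs of integers) cross:
their endpoints strictly interleave. -/
def Crosses (e f : Edge) : Prop :=
  (min e.1 e.2 < min f.1 f.2 ∧ min f.1 f.2 < max e.1 e.2 ∧ max e.1 e.2 < max f.1 f.2) ∨
  (min f.1 f.2 < min e.1 e.2 ∧ min e.1 e.2 < max f.1 f.2 ∧ max f.1 f.2 < max e.1 e.2)

/-- A finite set of edges is an `l`-crossing if it consists of `l` pairwise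
crossing edges. -/
def IsCrossing (l : ℕ) (S : Finset Edge) : Prop :=
  S.card = l ∧ ∀ e ∈ S, ∀ f ∈ S, e ≠ f → Crosses e f

/-- A set of edges is `l`-crossing-free if no `l` of its edges pairwise cross. -/
def CrossingFree (l : ℕ) (E : Set Edge) : Prop :=
  ¬ ∃ S : Finset Edge, ↑S ⊆ E ∧ IsCrossing l S

/-- A set of edges is `n`-periodic if `e ∈ E ↔ e + n ∈ E`. -/
def Periodic (n : ℕ) (E : Set Edge) : Prop := ∀ e, e ∈ E ↔ shift e (n : ℤ) ∈ E

/-- All members are genuine edges `[a,b]` with `a < b`. -/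
def ValidEdges (E : Set Edge) : Prop := ∀ e ∈ E, e.1 < e.2

/-- An `n`-periodic `k`-triangulation on `ℤ`: an `n`-periodic
`(k+1)`-crossing-free set of edges that is maximal under inclusion among
`n`-periodic `(k+1)`-crossing-free sets of edges. -/
def IsTriangulation (n k : ℕ) (T : Set Edge) : Prop :=
  ValidEdges T ∧ Periodic n T ∧ CrossingFree (k+1) T ∧
  ∀ T', ValidEdges T' → Periodic n T' → CrossingFree (k+1) T' → T ⊆ T' → T' = T

/-- The cyclic order relation on integers: `cyc a b c` iff
`a<b<c` or `b<c<a` or `c<a<b`. -/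
def cyc (a b c : ℤ) : Prop := (a < b ∧ b < c) ∨ (b < c ∧ c < a) ∨ (c < a ∧ a < b)

/-- Membership of the unordered edge `[a,b]` in an edge set. -/
def EdgeMem (T : Set Edge) (a b : ℤ) : Prop := (a, b) ∈ T ∨ (b, a) ∈ T

/-- `∠(u,v,w)` is an angle of `T`: the edges `[u,v],[v,w]` lie in `T`,
`cyc u v w`, and `T` has no edge `[v,w₀]` with `w₀ ≺ u ≺ v ≺ w` in cyclic
order. -/
def IsAngle (T : Set Edge) (u v w : ℤ) : Prop :=
  EdgeMem T u v ∧ EdgeMem T v w ∧ cyc u v w ∧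
  ¬ ∃ w₀ : ℤ, EdgeMem T v w₀ ∧ cyc w₀ u v ∧ cyc w₀ v w

/-! If no two crossing edges of `T` cross `e = [a, b]`, then by maximality the orbit `e + nℤ` cannot
be added to `T`. As `e` has length at most `2n`, the only 3-crossings that the orbit can create
consist of `e`, `e + n` and an edge `f ∈ T` crossing both. Then `f + n` or `f - n` crosses `e` and
`f`, except when `f` is short and crosses `e` from the right; in that case the same maximality
argument, applied to the edge `[a, a + n]` (which crosses none of its translates), shows that
`[a, a + n]` lies in `T`, and its translate `[a + n, a + 2n]` crosses `e` and `f`. -/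

/-- `T ∪ {e}` contains a 3-crossing through `e`. -/
def CrossedByCrossingPair (T : Set Edge) (e : Edge) : Prop :=
  ∃ f₁ ∈ T, ∃ f₂ ∈ T, Crosses f₁ f₂ ∧ Crosses f₁ e ∧ Crosses f₂ e

def translates (n : ℕ) (e : Edge) : Set Edge := Set.range fun k : ℤ => shift e (k * n)

theorem shift_shift (e : Edge) (s t : ℤ) : shift (shift e s) t = shift e (s + t) := by
  simp only [shift, add_assoc]

theorem shift_shift_of_add_eq {e : Edge} {s t u : ℤ} (h : s + t = u) :
    shift (shift e s) t = shift e u := by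
  rw [shift_shift, h]

@[simp]
theorem shift_zero (e : Edge) : shift e 0 = e := by
  simp [shift]

@[simp]
theorem shift_neg_shift (e : Edge) (t : ℤ) : shift (shift e (-t)) t = e := by
  simp [shift]

@[simp]
theorem shift_shift_neg (e : Edge) (t : ℤ) : shift (shift e t) (-t) = e := by
  simp [shift]

theorem Crosses.symm {e f : Edge} (h : Crosses e f) : Crosses f e :=
  Or.symm h

theorem not_crosses_self (e : Edge) : ¬ Crosses e e := by
  simp only [Crosses]
  omega

theorem Crosses.ne {e f : Edge} (h : Crosses e f) : e ≠ f := by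
  rintro rfl
  exact not_crosses_self e h

theorem crosses_swap (e : Edge) (a b : ℤ) : Crosses e (b, a) ↔ Crosses e (a, b) := by
  simp only [Crosses]
  omega

@[simp]
theorem crosses_shift_shift (e f : Edge) (t : ℤ) :
    Crosses (shift e t) (shift f t) ↔ Crosses e f := by
  simp only [Crosses, shift]
  omega

theorem crosses_mk_iff {c d e f : ℤ} (h₁ : c < d) (h₂ : e < f) :
    Crosses (c, d) (e, f) ↔ (c < e ∧ e < d ∧ d < f) ∨ (e < c ∧ c < f ∧ f < d) := by
  simp only [Crosses, min_eq_left h₁.le, max_eq_right h₁.le, min_eq_left h₂.le,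
    max_eq_right h₂.le]

theorem crosses_shift_self_iff {p q : ℤ} (h : p < q) (t : ℤ) :
    Crosses (p, q) (shift (p, q) t) ↔ 0 < t ∧ t < q - p ∨ 0 < -t ∧ -t < q - p := by
  simp only [Crosses, shift]
  omega

theorem crosses_shift_mul_self {p q : ℤ} {n : ℕ} (h : p < q) (hlen : q - p ≤ 2 * n) {m : ℤ}
    (hm : Crosses (p, q) (shift (p, q) (m * n))) :
    (m = 1 ∨ m = -1) ∧ Crosses (p, q) (shift (p, q) n) := by
  rw [crosses_shift_self_iff h] at hm ⊢
  have hn : (0 : ℤ) ≤ n := n.cast_nonneg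
  rcases hm with ⟨h₁, h₂⟩ | ⟨h₁, h₂⟩
  · have : 0 < m := by by_contra!; nlinarith
    have : m < 2 := by by_contra!; nlinarith
    obtain rfl : m = 1 := by omega
    omega
  · have : m < 0 := by by_contra!; nlinarith
    have : -2 < m := by by_contra!; nlinarith
    obtain rfl : m = -1 := by omega
    omega

theorem crosses_shift_cases {n a b c d : ℤ} (hab : a < b) (hcd : c < d) (hn : n < b - a)
    (hlen : b - a ≤ 2 * n) (h₁ : Crosses (c, d) (a, b)) (h₂ : Crosses (c, d) (shift (a, b) n)) :
    (Crosses (shift (c, d) n) (a, b) ∧ Crosses (c, d) (shift (c, d) n)) ∨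
    (Crosses (shift (c, d) (-n)) (a, b) ∧ Crosses (shift (c, d) (-n)) (c, d)) ∨
    (a < c ∧ c < a + n ∧ b < d ∧ d - c ≤ n) := by
  simp only [shift] at *
  rw [crosses_mk_iff hcd hab] at h₁
  rw [crosses_mk_iff hcd (by omega)] at h₂
  rw [crosses_mk_iff (by omega) hab, crosses_mk_iff (by omega) hab, crosses_mk_iff hcd (by omega),
    crosses_mk_iff (by omega) hcd]
  omega

theorem crosses_or_crosses_shift {n a b : ℤ} (hn₀ : 0 < n) (hn : n < b - a) {g : Edge}
    (hg : Crosses g (a, a + n)) : Crosses g (a, b) ∨ Crosses g (shift (a, b) n) := by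
  simp only [Crosses, shift] at *
  omega

theorem crosses_or_crosses_shift_of_not_crosses {n a b c d x y u v : ℤ} (hxy : x < y)
    (huv : u < v) (hn : n < b - a) (hca : c < a + n) (hbd : b < d) (hdc : d - c ≤ n)
    (hgh : Crosses (x, y) (u, v))
    (hg : Crosses (x, y) (a, a + n)) (hh : Crosses (u, v) (a, a + n))
    (hfg : ¬ Crosses (c, d) (x, y)) (hfh : ¬ Crosses (c, d) (u, v)) :
    (Crosses (x, y) (a, b) ∧ Crosses (u, v) (a, b)) ∨
      (Crosses (x, y) (shift (a, b) n) ∧ Crosses (u, v) (shift (a, b) n)) := by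
  simp only [shift]
  rw [crosses_mk_iff hxy huv] at hgh
  rw [crosses_mk_iff hxy (by omega)] at hg ⊢
  rw [crosses_mk_iff huv (by omega)] at hh ⊢
  rw [crosses_mk_iff hxy (by omega), crosses_mk_iff huv (by omega)]
  rw [crosses_mk_iff (by omega) hxy] at hfg
  rw [crosses_mk_iff (by omega) huv] at hfh
  omega

theorem crossedByCrossingPair_swap {T : Set Edge} (a b : ℤ) :
    CrossedByCrossingPair T (b, a) ↔ CrossedByCrossingPair T (a, b) := by
  simp only [CrossedByCrossingPair, crosses_swap]

theorem CrossedByCrossingPair.of_shift {T : Set Edge} {e : Edge} {t : ℤ}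
    (hT : ∀ f, shift f t ∈ T ↔ f ∈ T) (h : CrossedByCrossingPair T (shift e t)) :
    CrossedByCrossingPair T e := by
  obtain ⟨f₁, h₁, f₂, h₂, h₁₂, he₁, he₂⟩ := h
  refine ⟨shift f₁ (-t), ?_, shift f₂ (-t), ?_, ?_, ?_, ?_⟩
  · rwa [← hT, shift_neg_shift]
  · rwa [← hT, shift_neg_shift]
  · rwa [crosses_shift_shift]
  · rwa [← crosses_shift_shift _ _ t, shift_neg_shift]
  · rwa [← crosses_shift_shift _ _ t, shift_neg_shift]

section Periodicity

variable {n : ℕ}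

theorem Periodic.shift_mul_mem_iff {T : Set Edge} (h : Periodic n T) (k : ℤ) (e : Edge) :
    shift e (k * n) ∈ T ↔ e ∈ T := by
  induction k using Int.induction_on generalizing e with
  | zero => simp
  | succ i ih =>
    rw [← shift_shift_of_add_eq (by ring : (i : ℤ) * n + n = (i + 1) * n), ← h, ih]
  | pred i ih =>
    rw [h, shift_shift_of_add_eq (by ring : (-(i : ℤ) - 1) * n + n = -i * n), ih]

theorem Periodic.union {A B : Set Edge} (hA : Periodic n A) (hB : Periodic n B) :
    Periodic n (A ∪ B) := fun e => or_congr (hA e) (hB e)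

theorem periodic_translates (e : Edge) : Periodic n (translates n e) := by
  intro f
  constructor
  · rintro ⟨k, rfl⟩
    exact ⟨k + 1, (shift_shift_of_add_eq (by ring)).symm⟩
  · rintro ⟨k, hk⟩
    refine ⟨k - 1, ?_⟩
    beta_reduce at hk ⊢
    rw [← shift_shift_neg f n, ← hk]
    exact (shift_shift_of_add_eq (by ring)).symm

end Periodicity

section Lifting

variable {n : ℕ} {T : Set Edge} {p q : ℤ}

theorem not_crossedByCrossingPair_of_translate (hper : Periodic n T)
    (hblock : ¬ CrossedByCrossingPair T (p, q)) {x y z : Edge} (hx : x ∈ translates n (p, q))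
    (hy : y ∈ T) (hz : z ∈ T) (hxy : Crosses x y) (hxz : Crosses x z) (hyz : Crosses y z) :
    False := by
  obtain ⟨k, rfl⟩ := hx
  exact hblock <| CrossedByCrossingPair.of_shift (hper.shift_mul_mem_iff k)
    ⟨y, hy, z, hz, hyz, hxy.symm, hxz.symm⟩

theorem not_crosses_consecutive_translates (hper : Periodic n T)
    (hsep : ∀ g ∈ T, Crosses g (p, q) → ¬ Crosses g (shift (p, q) n)) {g : Edge} (hg : g ∈ T)
    (k : ℤ) (h₁ : Crosses g (shift (p, q) (k * n))) (h₂ : Crosses g (shift (p, q) ((k + 1) * n))) :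
    False := by
  have hg' : shift g (-k * n) ∈ T := (hper.shift_mul_mem_iff (-k) g).mpr hg
  refine hsep _ hg' ?_ ?_
  · rwa [← crosses_shift_shift _ _ (k * n), shift_shift_of_add_eq (by ring : -k * n + k * n = 0),
      shift_zero]
  · rwa [← crosses_shift_shift _ _ (k * n), shift_shift_of_add_eq (by ring : -k * n + k * n = 0),
      shift_zero, shift_shift, add_comm, ← add_one_mul]

theorem crosses_translates (hpq : p < q) (hlen : q - p ≤ 2 * n) {k k' : ℤ}
    (h : Crosses (shift (p, q) (k * n)) (shift (p, q) (k' * n))) :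
    (k' = k + 1 ∨ k = k' + 1) ∧ Crosses (p, q) (shift (p, q) n) := by
  have hrel : Crosses (p, q) (shift (p, q) ((k' - k) * n)) := by
    rwa [← crosses_shift_shift _ _ (k * n),
      shift_shift_of_add_eq (by ring : (k' - k) * n + k * n = k' * n)]
  obtain ⟨hm, hcross⟩ := crosses_shift_mul_self hpq hlen hrel
  exact ⟨by omega, hcross⟩

theorem not_crosses_two_translates (hper : Periodic n T) (hpq : p < q) (hlen : q - p ≤ 2 * n)
    (hsep : Crosses (p, q) (shift (p, q) n) →
      ∀ g ∈ T, Crosses g (p, q) → ¬ Crosses g (shift (p, q) n))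
    {x y z : Edge} (hx : x ∈ translates n (p, q)) (hy : y ∈ translates n (p, q)) (hz : z ∈ T)
    (hxy : Crosses x y) (hxz : Crosses x z) (hyz : Crosses y z) : False := by
  obtain ⟨k, rfl⟩ := hx
  obtain ⟨k', rfl⟩ := hy
  obtain ⟨rfl | rfl, hcross⟩ := crosses_translates hpq hlen hxy
  · exact not_crosses_consecutive_translates hper (hsep hcross) hz k hxz.symm hyz.symm
  · exact not_crosses_consecutive_translates hper (hsep hcross) hz k' hyz.symm hxz.symm

theorem not_crosses_three_translates (hpq : p < q) (hlen : q - p ≤ 2 * n) {x y z : Edge}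
    (hx : x ∈ translates n (p, q)) (hy : y ∈ translates n (p, q)) (hz : z ∈ translates n (p, q))
    (hxy : Crosses x y) (hxz : Crosses x z) (hyz : Crosses y z) : False := by
  obtain ⟨k, rfl⟩ := hx
  obtain ⟨k', rfl⟩ := hy
  obtain ⟨k'', rfl⟩ := hz
  have h₁ := (crosses_translates hpq hlen hxy).1
  have h₂ := (crosses_translates hpq hlen hxz).1
  have h₃ := (crosses_translates hpq hlen hyz).1
  omega

theorem crossingFree_union_translates (hfree : CrossingFree 3 T) (hper : Periodic n T)
    (hpq : p < q) (hlen : q - p ≤ 2 * n) (hblock : ¬ CrossedByCrossingPair T (p, q))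
    (hsep : Crosses (p, q) (shift (p, q) n) →
      ∀ g ∈ T, Crosses g (p, q) → ¬ Crosses g (shift (p, q) n)) :
    CrossingFree 3 (T ∪ translates n (p, q)) := by
  rintro ⟨S, hS, hcard, hcr⟩
  obtain ⟨x, y, z, hxy, hxz, hyz, rfl⟩ := Finset.card_eq_three.mp hcard
  have cxy := hcr x (by simp) y (by simp) hxy
  have cxz := hcr x (by simp) z (by simp) hxz
  have cyz := hcr y (by simp) z (by simp) hyz
  rcases hS (by simp : x ∈ _) with hx | hx <;> rcases hS (by simp : y ∈ _) with hy | hy <;>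
    rcases hS (by simp : z ∈ _) with hz | hz
  · exact hfree ⟨{x, y, z}, by simp [Set.insert_subset_iff, hx, hy, hz], hcard, hcr⟩
  · exact not_crossedByCrossingPair_of_translate hper hblock hz hx hy cxz.symm cyz.symm cxy
  · exact not_crossedByCrossingPair_of_translate hper hblock hy hx hz cxy.symm cyz cxz
  · exact not_crosses_two_translates hper hpq hlen hsep hy hz hx cyz cxy.symm cxz.symm
  · exact not_crossedByCrossingPair_of_translate hper hblock hx hy hz cxy cxz cyz
  · exact not_crosses_two_translates hper hpq hlen hsep hx hz hy cxz cxy cyz.symm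
  · exact not_crosses_two_translates hper hpq hlen hsep hx hy hz cxy cxz cyz
  · exact not_crosses_three_translates hpq hlen hx hy hz cxy cxz cyz

theorem IsTriangulation.crosses_shift_of_not_crossedByCrossingPair (hT : IsTriangulation n 2 T)
    (hpq : p < q) (hlen : q - p ≤ 2 * n) (hnot : (p, q) ∉ T)
    (hblock : ¬ CrossedByCrossingPair T (p, q)) :
    Crosses (p, q) (shift (p, q) n) ∧ ∃ g ∈ T, Crosses g (p, q) ∧ Crosses g (shift (p, q) n) := by
  obtain ⟨hval, hper, hfree, hmax⟩ := hT
  by_contra! hsep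
  have hval' : ValidEdges (T ∪ translates n (p, q)) := by
    rintro e (he | ⟨k, rfl⟩)
    · exact hval e he
    · simp only [shift]
      omega
  have hT' := hmax _ hval' (hper.union (periodic_translates _))
    (crossingFree_union_translates hfree hper hpq hlen hblock hsep) Set.subset_union_left
  exact hnot (hT' ▸ Or.inr ⟨0, by simp⟩)

theorem IsTriangulation.crossedByCrossingPair_of_short_crossing (hT : IsTriangulation n 2 T)
    {a b c d : ℤ} (hf : (c, d) ∈ T) (hn : (n : ℤ) < b - a) (hlen : b - a ≤ 2 * n) (hac : a < c)
    (hca : c < a + n) (hbd : b < d) (hdc : d - c ≤ n) :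
    CrossedByCrossingPair T (a, b) := by
  have hval := hT.1
  have hper := hT.2.1
  by_contra hblock
  have hblock' : ¬ CrossedByCrossingPair T (shift (a, b) n) :=
    fun h => hblock (h.of_shift fun f => (hper f).symm)
  have hfe : Crosses (c, d) (a, b) := by rw [crosses_mk_iff (by omega) (by omega)]; omega
  have hfe' : Crosses (c, d) (shift (a, b) n) := by
    rw [shift, crosses_mk_iff (by omega) (by omega)]; omega
  have hnot : (a, a + n) ∉ T := by
    refine fun h => hblock ⟨(c, d), hf, shift (a, a + n) n, (hper _).mp h, ?_, hfe, ?_⟩ <;>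
      rw [shift, crosses_mk_iff (by omega) (by omega)] <;> omega
  have hfree : ¬ CrossedByCrossingPair T (a, a + n) := by
    rintro ⟨⟨x, y⟩, hg, ⟨u, v⟩, hh, hgh, hga, hha⟩
    have through_f : ∀ g ∈ T, Crosses g (a, a + n) → ¬ Crosses (c, d) g := by
      intro g hg hga hfg
      rcases crosses_or_crosses_shift (by omega) hn hga with h | h
      exacts [hblock ⟨_, hf, g, hg, hfg, hfe, h⟩, hblock' ⟨_, hf, g, hg, hfg, hfe', h⟩]
    rcases crosses_or_crosses_shift_of_not_crosses (hval _ hg) (hval _ hh) hn hca hbd hdc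
      hgh hga hha (through_f _ hg hga) (through_f _ hh hha) with ⟨h₁, h₂⟩ | ⟨h₁, h₂⟩
    exacts [hblock ⟨_, hg, _, hh, hgh, h₁, h₂⟩, hblock' ⟨_, hg, _, hh, hgh, h₁, h₂⟩]
  obtain ⟨hcross, -⟩ :=
    hT.crosses_shift_of_not_crossedByCrossingPair (by omega) (by omega) hnot hfree
  rw [crosses_shift_self_iff (by omega)] at hcross
  omega

theorem IsTriangulation.crossedByCrossingPair (hT : IsTriangulation n 2 T) (hpq : p < q)
    (hlen : q - p ≤ 2 * n) (hnot : (p, q) ∉ T) : CrossedByCrossingPair T (p, q) := by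
  by_contra hblock
  obtain ⟨hcross, ⟨c, d⟩, hf, hfe, hfe'⟩ :=
    hT.crosses_shift_of_not_crossedByCrossingPair hpq hlen hnot hblock
  have hn : (n : ℤ) < q - p := by rw [crosses_shift_self_iff hpq] at hcross; omega
  rcases crosses_shift_cases hpq (hT.1 _ hf) hn hlen hfe hfe' with
    ⟨h₁, h₂⟩ | ⟨h₁, h₂⟩ | ⟨hpc, hcp, hqd, hdc⟩
  · exact hblock ⟨_, (hT.2.1 _).mp hf, _, hf, h₂.symm, h₁, hfe⟩
  · exact hblock ⟨_, (hT.2.1 _).mpr (by rwa [shift_neg_shift]), _, hf, h₂, h₁, hfe⟩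
  · exact hblock (hT.crossedByCrossingPair_of_short_crossing hf hn hlen hpc hcp hqd hdc)

end Lifting

theorem maximal_lifting_general (n : ℕ)
    (T : Set Edge) (hT : IsTriangulation n 2 T) (a b : ℤ) (hab : a ≠ b)
    (hlen : |b - a| ≤ 2 * (n : ℤ)) (hnot : ¬ EdgeMem T a b) :
    ∃ f₁ f₂ : Edge, f₁ ∈ T ∧ f₂ ∈ T ∧ f₁ ≠ f₂ ∧
      Crosses f₁ f₂ ∧ Crosses f₁ (a, b) ∧ Crosses f₂ (a, b) := by
  obtain ⟨hlen₁, hlen₂⟩ := abs_le.mp hlen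
  have hcrossed : CrossedByCrossingPair T (a, b) := by
    rcases hab.lt_or_gt with h | h
    · exact hT.crossedByCrossingPair h hlen₂ (fun hm => hnot (Or.inl hm))
    · exact (crossedByCrossingPair_swap a b).mp
        (hT.crossedByCrossingPair h (by omega) (fun hm => hnot (Or.inr hm)))
  obtain ⟨f₁, h₁, f₂, h₂, h₁₂, hf₁, hf₂⟩ := hcrossed
  exact ⟨f₁, f₂, h₁, h₂, h₁₂.ne, h₁₂, hf₁, hf₂⟩

/-- Maximal Lifting Theorem: If `e = [a,b]` is an edge of length
at most `2n` not contained in an `n`-periodic 2-triangulation `T`, then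
`T ∪ {e}` contains a 3-crossing: there are `f₁, f₂ ∈ T` such that
`{e, f₁, f₂}` are three pairwise crossing edges. -/
theorem maximal_lifting (n : ℕ) (hn : 1 ≤ n)
    (T : Set Edge) (hT : IsTriangulation n 2 T) (a b : ℤ) (hab : a ≠ b)
    (hlen : |b - a| ≤ 2 * (n : ℤ)) (hnot : ¬ EdgeMem T a b) :
    ∃ f₁ f₂ : Edge, f₁ ∈ T ∧ f₂ ∈ T ∧ f₁ ≠ f₂ ∧
      Crosses f₁ f₂ ∧ Crosses f₁ (a, b) ∧ Crosses f₂ (a, b) :=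
  maximal_lifting_general n T hT a b hab hlen hnot

end Multitriangulation
end

section
/- Let n ≥ 1 and let Ē be an n-periodic set of edges on ℤ, each of length at most 2n. Then Ē contains a 3-crossing if and only if φ(Ē) = {{a mod 4n, b mod 4n} : [a,b] ∈ Ē} contains a 3-crossing on the 4n-gon. Equivalently, Ē is 3-crossing-free if and only if φ(Ē) is 3-crossing-free. -/
/- Edges on the universal cover of the half-cylinder, modeled by the integers.
   An edge is an unordered pair of distinct integers, represented as an ordered
   pair `(a, b)` with `a < b` (validity). -/

namespace Multitriangulation

/-- Interleaving of representatives `0 ≤ a < b < m`, `0 ≤ c < d < m`: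
`a<c<b<d` or `c<a<d<b` (formulated symmetrically via `min`/`max`). -/
def crossIndex (a b c d : ℕ) : Prop :=
  (min a b < min c d ∧ min c d < max a b ∧ max a b < max c d) ∨
  (min c d < min a b ∧ min a b < max c d ∧ max c d < max a b)

/-- Two edges of the `m`-gon (vertices labeled by `ZMod m`) cross: their
endpoints interleave in cyclic order, via the representatives in `[0, m)`. -/
def PolyCrosses {m : ℕ} (e f : Sym2 (ZMod m)) : Prop :=
  ∃ x y z w : ZMod m, e = s(x, y) ∧ f = s(z, w) ∧ crossIndex x.val y.val z.val w.val

/-- A finite set of polygon edges is an `l`-crossing if it consists of `l`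
pairwise crossing edges. -/
def PolyIsCrossing {m : ℕ} (l : ℕ) (S : Finset (Sym2 (ZMod m))) : Prop :=
  S.card = l ∧ ∀ e ∈ S, ∀ f ∈ S, e ≠ f → PolyCrosses e f

/-- A set of polygon edges is `l`-crossing-free. -/
def PolyCrossingFree {m : ℕ} (l : ℕ) (E : Set (Sym2 (ZMod m))) : Prop :=
  ¬ ∃ S : Finset (Sym2 (ZMod m)), ↑S ⊆ E ∧ PolyIsCrossing l S

/-- Invariance under the rotation `v ↦ v + n`. -/
def PolyPeriodic (n : ℕ) {m : ℕ} (T : Set (Sym2 (ZMod m))) : Prop :=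
  ∀ e, e ∈ T ↔ Sym2.map (· + (n : ZMod m)) e ∈ T

/-- All members are genuine edges (pairs of distinct vertices). -/
def PolyValid {m : ℕ} (T : Set (Sym2 (ZMod m))) : Prop := ∀ e ∈ T, ¬ e.IsDiag

/-- A `2`-triangulation on the `m`-gon: a 3-crossing-free set of edges,
maximal under inclusion among 3-crossing-free sets of edges. -/
def IsPolyTriangulation {m : ℕ} (T : Set (Sym2 (ZMod m))) : Prop :=
  PolyValid T ∧ PolyCrossingFree 3 T ∧
  ∀ T', PolyValid T' → PolyCrossingFree 3 T' → T ⊆ T' → T' = T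

/-- The projection `φ` sending an edge set on `ℤ` to an edge set on the
`4n`-gon: `[a,b] ↦ {a mod 4n, b mod 4n}`. -/
def phi (n : ℕ) (E : Set Edge) : Set (Sym2 (ZMod (4 * n))) :=
  {x | ∃ e ∈ E, x = s(((e.1 : ZMod (4 * n))), ((e.2 : ZMod (4 * n))))}

/-! Sort a 3-crossing on `ℤ` as `a₁ < a₂ < a₃ < b₁ < b₂ < b₃`. As every edge has length at
most `2n`, `b₃ < a₁ + 4n`: all six endpoints lie in a window of length `4n`, on which reduction
mod `4n` is a rotation of the cyclic order, so the images still cross pairwise.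

Conversely, by `4n`-periodicity a chord `{X, Y}` (`0 ≤ X < Y < 4n`) of `φ(Ē)` lifts to `[X, Y]`
or to `[Y - 4n, X]` in `Ē`. Depending on which kind of lift each of three pairwise crossing
chords has, translating some of the lifts by `2n` or `4n` gives a 3-crossing in `Ē`. -/

theorem exists_card_three_pairwise_iff {α : Type*} {R : α → α → Prop} [Std.Symm R]
    [Std.Irrefl R] (F : Set α) :
    (∃ S : Finset α, ↑S ⊆ F ∧ S.card = 3 ∧ (S : Set α).Pairwise R) ↔
      ∃ x ∈ F, ∃ y ∈ F, ∃ z ∈ F, R x y ∧ R x z ∧ R y z := by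
  classical
  constructor
  · rintro ⟨S, hSF, hcard, hR⟩
    obtain ⟨x, y, z, hxy, hxz, hyz, rfl⟩ := Finset.card_eq_three.mp hcard
    simp only [Finset.coe_insert, Finset.coe_singleton, Set.insert_subset_iff,
      Set.singleton_subset_iff] at hSF
    exact ⟨x, hSF.1, y, hSF.2.1, z, hSF.2.2, hR (by simp) (by simp) hxy,
      hR (by simp) (by simp) hxz, hR (by simp) (by simp) hyz⟩
  · rintro ⟨x, hx, y, hy, z, hz, hxy, hxz, hyz⟩
    have hne : ∀ {a b}, R a b → a ≠ b := fun h hab => irrefl _ (hab ▸ h)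
    refine ⟨{x, y, z}, ?_, Finset.card_eq_three.mpr ⟨x, y, z, hne hxy, hne hxz, hne hyz, rfl⟩, ?_⟩
    · simp [Set.insert_subset_iff, hx, hy, hz]
    · simp only [Finset.coe_insert, Finset.coe_singleton]
      rw [Set.pairwise_insert_of_symm, Set.pairwise_insert_of_symm]
      simp [hxy, hxz, hyz]

instance : Std.Symm Crosses where
  symm _ _ h := by unfold Crosses at *; tauto

instance : Std.Irrefl Crosses where
  irrefl _ := by unfold Crosses; omega

theorem crosses_iff_of_lt {e f : Edge} (he : e.1 < e.2) (hf : f.1 < f.2) :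
    Crosses e f ↔ (e.1 < f.1 ∧ f.1 < e.2 ∧ e.2 < f.2) ∨ (f.1 < e.1 ∧ e.1 < f.2 ∧ f.2 < e.2) := by
  unfold Crosses; omega

theorem exists_sorted_of_pairwise_crosses {P : Edge → Prop} {e f g : Edge}
    (hPe : P e) (hPf : P f) (hPg : P g) (he : e.1 < e.2) (hf : f.1 < f.2) (hg : g.1 < g.2)
    (hef : Crosses e f) (heg : Crosses e g) (hfg : Crosses f g) :
    ∃ e₁ e₂ e₃ : Edge, P e₁ ∧ P e₂ ∧ P e₃ ∧
      e₁.1 < e₂.1 ∧ e₂.1 < e₃.1 ∧ e₃.1 < e₁.2 ∧ e₁.2 < e₂.2 ∧ e₂.2 < e₃.2 := by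
  rw [crosses_iff_of_lt he hf] at hef
  rw [crosses_iff_of_lt he hg] at heg
  rw [crosses_iff_of_lt hf hg] at hfg
  rcases hef with hef | hef <;> rcases heg with heg | heg <;> rcases hfg with hfg | hfg
  all_goals first
    | omega
    | exact ⟨e, f, g, hPe, hPf, hPg, by omega⟩ | exact ⟨e, g, f, hPe, hPg, hPf, by omega⟩
    | exact ⟨f, e, g, hPf, hPe, hPg, by omega⟩ | exact ⟨f, g, e, hPf, hPg, hPe, by omega⟩
    | exact ⟨g, e, f, hPg, hPe, hPf, by omega⟩ | exact ⟨g, f, e, hPg, hPf, hPe, by omega⟩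

theorem Periodic.shift_mem {n : ℕ} {E : Set Edge} (hper : Periodic n E) {e : Edge} (he : e ∈ E)
    (k : ℤ) : shift e (n * k) ∈ E := by
  induction k using Int.induction_on with
  | zero => simpa [shift] using he
  | succ k ih =>
    convert (hper _).mp ih using 1
    simp only [shift, Prod.mk.injEq]; constructor <;> ring
  | pred k ih =>
    refine (hper _).mpr ?_
    convert ih using 1
    simp only [shift, Prod.mk.injEq]; constructor <;> ring

theorem Periodic.mul {n : ℕ} {E : Set Edge} (hper : Periodic n E) (c : ℕ) :
    Periodic (c * n) E := by
  intro e
  refine ⟨fun he => ?_, fun he => ?_⟩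
  · convert hper.shift_mem he c using 2; push_cast; ring
  · convert hper.shift_mem he (-c) using 1
    ext <;> simp only [shift] <;> push_cast <;> ring

theorem crossIndex_swap_left {a b c d : ℕ} : crossIndex b a c d ↔ crossIndex a b c d := by
  simp only [crossIndex, min_comm b a, max_comm b a]

theorem crossIndex_swap_right {a b c d : ℕ} : crossIndex a b d c ↔ crossIndex a b c d := by
  simp only [crossIndex, min_comm d c, max_comm d c]

theorem polyCrosses_mk_iff {m : ℕ} {x y z w : ZMod m} :
    PolyCrosses s(x, y) s(z, w) ↔ crossIndex x.val y.val z.val w.val := by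
  refine ⟨fun ⟨x', y', z', w', hxy, hzw, h⟩ => ?_, fun h => ⟨x, y, z, w, rfl, rfl, h⟩⟩
  rw [Sym2.eq_iff] at hxy hzw
  rcases hxy with ⟨rfl, rfl⟩ | ⟨rfl, rfl⟩ <;> rcases hzw with ⟨rfl, rfl⟩ | ⟨rfl, rfl⟩ <;>
    simpa only [crossIndex_swap_left, crossIndex_swap_right] using h

instance {m : ℕ} : Std.Symm (PolyCrosses (m := m)) where
  symm _ _ := fun ⟨x, y, z, w, hxy, hzw, h⟩ =>
    ⟨z, w, x, y, hzw, hxy, by unfold crossIndex at *; tauto⟩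

instance {m : ℕ} : Std.Irrefl (PolyCrosses (m := m)) where
  irrefl p := by
    induction p using Sym2.ind with
    | _ x y => rw [polyCrosses_mk_iff]; unfold crossIndex; omega

theorem crossIndex_val_add {m : ℕ} [NeZero m] {x y z w : ZMod m} (t : ZMod m)
    (h : crossIndex x.val y.val z.val w.val) :
    crossIndex (x + t).val (y + t).val (z + t).val (w + t).val := by
  have rot : ∀ u : ZMod m, u.val < m ∧ (u + t).val < m ∧
      ((u + t).val = u.val + t.val ∨ (u + t).val + m = u.val + t.val) := fun u => by
    refine ⟨u.val_lt, (u + t).val_lt, ?_⟩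
    rcases lt_or_ge (u.val + t.val) m with hu | hu
    · exact .inl (ZMod.val_add_of_lt hu)
    · exact .inr (by rw [ZMod.val_add_of_le hu]; omega)
  have ht := t.val_lt
  unfold crossIndex at *
  obtain ⟨hx, hx', ex | ex⟩ := rot x <;> obtain ⟨hy, hy', ey | ey⟩ := rot y <;>
    obtain ⟨hz, hz', ez | ez⟩ := rot z <;> obtain ⟨hw, hw', ew | ew⟩ := rot w <;> omega

theorem val_intCast_of_nonneg_of_lt {m : ℕ} [NeZero m] {a : ℤ} (h₀ : 0 ≤ a) (h : a < m) :
    ((a : ZMod m).val : ℤ) = a := by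
  rw [ZMod.val_intCast, Int.emod_eq_of_lt h₀ h]

theorem polyCrosses_intCast_of_lt {m : ℕ} [NeZero m] {a b c d : ℤ}
    (hac : a < c) (hcb : c < b) (hbd : b < d) (hd : d < a + m) :
    PolyCrosses s((a : ZMod m), (b : ZMod m)) s((c : ZMod m), (d : ZMod m)) := by
  have rotate : ∀ x : ℤ, (x : ZMod m) = ((x - a : ℤ) : ZMod m) + a := fun x => by push_cast; ring
  rw [polyCrosses_mk_iff, rotate a, rotate b, rotate c, rotate d]
  refine crossIndex_val_add _ ?_
  have val : ∀ x : ℤ, a ≤ x → x < a + m → (((x - a : ℤ) : ZMod m).val : ℤ) = x - a :=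
    fun x h₀ h => val_intCast_of_nonneg_of_lt (by omega) (by omega)
  have := val a le_rfl (by omega)
  have := val b (by omega) (by omega)
  have := val c (by omega) (by omega)
  have := val d (by omega) (by omega)
  unfold crossIndex
  omega

theorem crosses_of_polyCrosses_intCast {m : ℕ} [NeZero m] {a b c d : ℤ}
    (ha : 0 ≤ a) (hb : b < m) (hc : 0 ≤ c) (hd : d < m) (hab : a < b) (hcd : c < d)
    (h : PolyCrosses s((a : ZMod m), (b : ZMod m)) s((c : ZMod m), (d : ZMod m))) :
    Crosses (a, b) (c, d) := by
  rw [polyCrosses_mk_iff] at h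
  have := val_intCast_of_nonneg_of_lt (m := m) ha (by omega)
  have := val_intCast_of_nonneg_of_lt (m := m) (a := b) (by omega) hb
  have := val_intCast_of_nonneg_of_lt (m := m) hc (by omega)
  have := val_intCast_of_nonneg_of_lt (m := m) (a := d) (by omega) hd
  unfold crossIndex at h
  unfold Crosses
  omega

theorem exists_chord_lift {m : ℕ} [NeZero m] {E : Set Edge} (hper : Periodic m E) {e : Edge}
    (he : e ∈ E) (h₁ : e.1 < e.2) (h₂ : e.2 < e.1 + m) :
    ∃ X Y : ℤ, 0 ≤ X ∧ X < Y ∧ Y < m ∧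
      s((e.1 : ZMod m), (e.2 : ZMod m)) = s((X : ZMod m), (Y : ZMod m)) ∧
      ((X, Y) ∈ E ∨ (Y - m, X) ∈ E) := by
  have hm : (0 : ℤ) < m := by exact_mod_cast NeZero.pos m
  have hcast : s((e.1 : ZMod m), (e.2 : ZMod m)) =
      s(((e.1 % m : ℤ) : ZMod m), ((e.2 % m : ℤ) : ZMod m)) := by
    rw [ZMod.intCast_mod, ZMod.intCast_mod]
  have hr₁ := Int.emod_add_mul_ediv e.1 m
  have hr₂ := Int.emod_add_mul_ediv e.2 m
  have hr₁₀ := Int.emod_nonneg e.1 hm.ne'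
  have hr₂₀ := Int.emod_nonneg e.2 hm.ne'
  have := Int.emod_lt_of_pos e.1 hm
  have := Int.emod_lt_of_pos e.2 hm
  set k := e.2 / m - e.1 / m with hk_def
  have hmk : m * k = (e.2 - e.1) - (e.2 % m - e.1 % m) := by linear_combination hr₂ - hr₁
  have hk₀ : -1 < k := lt_of_mul_lt_mul_left (by linarith : (m : ℤ) * (-1) < m * k) hm.le
  have hk₁ : k < 2 := lt_of_mul_lt_mul_left (by linarith : (m : ℤ) * k < m * 2) hm.le
  obtain hk | hk : k = 0 ∨ k = 1 := by omega
  · refine ⟨_, _, hr₁₀, ?_, by assumption, hcast, .inl ?_⟩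
    · rw [hk, mul_zero] at hmk; omega
    · convert hper.shift_mem he (-(e.1 / m)) using 1
      ext
      · simp only [shift]; linear_combination hr₁
      · simp only [shift]; linear_combination hr₂ + m * hk_def - m * hk
  · refine ⟨_, _, hr₂₀, ?_, by assumption, hcast.trans Sym2.eq_swap, .inr ?_⟩
    · rw [hk, mul_one] at hmk; omega
    · convert hper.shift_mem he (-(e.1 / m) - 1) using 1
      ext
      · simp only [shift]; linear_combination hr₁
      · simp only [shift]; linear_combination hr₂ + m * hk_def - m * hk

theorem exists_pairwise_crosses_of_chord_lifts {n : ℕ} {E : Set Edge} (hper : Periodic n E)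
    (hlen : ∀ e ∈ E, e.2 - e.1 ≤ 2 * (n : ℤ)) {X₁ Y₁ X₂ Y₂ X₃ Y₃ : ℤ}
    (hX₁₂ : X₁ < X₂) (hX₂₃ : X₂ < X₃) (hXY : X₃ < Y₁) (hY₁₂ : Y₁ < Y₂) (hY₂₃ : Y₂ < Y₃)
    (hwin : Y₃ < X₁ + 4 * n)
    (h₁ : (X₁, Y₁) ∈ E ∨ (Y₁ - 4 * n, X₁) ∈ E) (h₂ : (X₂, Y₂) ∈ E ∨ (Y₂ - 4 * n, X₂) ∈ E)
    (h₃ : (X₃, Y₃) ∈ E ∨ (Y₃ - 4 * n, X₃) ∈ E) :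
    ∃ x ∈ E, ∃ y ∈ E, ∃ z ∈ E, Crosses x y ∧ Crosses x z ∧ Crosses y z := by
  have translate : ∀ {a b : ℤ}, (a, b) ∈ E → ∀ k : ℤ, (a + n * k, b + n * k) ∈ E :=
    fun h k => hper.shift_mem h k
  have cross : ∀ {a b c d : ℤ}, (a < c ∧ c < b ∧ b < d) ∨ (c < a ∧ a < d ∧ d < b) →
      Crosses (a, b) (c, d) := fun h => by unfold Crosses; omega
  rcases h₁ with h₁ | h₁ <;> rcases h₂ with h₂ | h₂ <;> rcases h₃ with h₃ | h₃ <;>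
    have l₁ := hlen _ h₁ <;> have l₂ := hlen _ h₂ <;> have l₃ := hlen _ h₃
  · exact ⟨_, h₁, _, h₂, _, h₃, cross (by omega), cross (by omega), cross (by omega)⟩
  · exact ⟨_, h₁, _, h₂, _, h₃, cross (by omega), cross (by omega), cross (by omega)⟩
  · exact ⟨_, h₁, _, translate h₂ 2, _, h₃, cross (by omega), cross (by omega), cross (by omega)⟩
  · exact ⟨_, h₁, _, h₂, _, h₃, cross (by omega), cross (by omega), cross (by omega)⟩
  · exact ⟨_, translate h₁ 4, _, h₂, _, h₃, cross (by omega), cross (by omega), cross (by omega)⟩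
  · exact ⟨_, translate h₁ 2, _, h₂, _, h₃, cross (by omega), cross (by omega), cross (by omega)⟩
  · exact ⟨_, translate h₁ 4, _, translate h₂ 4, _, h₃, cross (by omega), cross (by omega),
      cross (by omega)⟩
  · exact ⟨_, h₁, _, h₂, _, h₃, cross (by omega), cross (by omega), cross (by omega)⟩

theorem exists_polyCrosses_triple_of_crosses_triple {n : ℕ} {E : Set Edge}
    (hval : ValidEdges E) (hlen : ∀ e ∈ E, e.2 - e.1 ≤ 2 * (n : ℤ))
    (h : ∃ x ∈ E, ∃ y ∈ E, ∃ z ∈ E, Crosses x y ∧ Crosses x z ∧ Crosses y z) :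
    ∃ p ∈ phi n E, ∃ q ∈ phi n E, ∃ r ∈ phi n E,
      PolyCrosses p q ∧ PolyCrosses p r ∧ PolyCrosses q r := by
  obtain ⟨e, he, f, hf, g, hg, hef, heg, hfg⟩ := h
  obtain ⟨e₁, e₂, e₃, h₁, h₂, h₃, h₁₂, h₂₃, h₃₁, h₁₂', h₂₃'⟩ :=
    exists_sorted_of_pairwise_crosses he hf hg (hval e he) (hval f hf) (hval g hg) hef heg hfg
  have l₁ := hlen e₁ h₁
  have l₃ := hlen e₃ h₃
  have : NeZero (4 * n) := ⟨by omega⟩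
  refine ⟨_, ⟨e₁, h₁, rfl⟩, _, ⟨e₂, h₂, rfl⟩, _, ⟨e₃, h₃, rfl⟩, ?_, ?_, ?_⟩ <;>
    exact polyCrosses_intCast_of_lt (by omega) (by omega) (by omega) (by push_cast; omega)

theorem exists_crosses_triple_of_polyCrosses_triple {n : ℕ} {E : Set Edge}
    (hval : ValidEdges E) (hper : Periodic n E) (hlen : ∀ e ∈ E, e.2 - e.1 ≤ 2 * (n : ℤ))
    (h : ∃ p ∈ phi n E, ∃ q ∈ phi n E, ∃ r ∈ phi n E,
      PolyCrosses p q ∧ PolyCrosses p r ∧ PolyCrosses q r) :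
    ∃ x ∈ E, ∃ y ∈ E, ∃ z ∈ E, Crosses x y ∧ Crosses x z ∧ Crosses y z := by
  obtain ⟨_, ⟨e, he, rfl⟩, _, ⟨f, hf, rfl⟩, _, ⟨g, hg, rfl⟩, hef, heg, hfg⟩ := h
  have : NeZero (4 * n) := ⟨by have := hval e he; have := hlen e he; omega⟩
  have lift := fun x (hx : x ∈ E) => exists_chord_lift (hper.mul 4) hx (hval x hx)
    (by have := hval x hx; have := hlen x hx; push_cast; omega)
  obtain ⟨X₁, Y₁, hX₁, hXY₁, hY₁, hs₁, h₁⟩ := lift e he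
  obtain ⟨X₂, Y₂, hX₂, hXY₂, hY₂, hs₂, h₂⟩ := lift f hf
  obtain ⟨X₃, Y₃, hX₃, hXY₃, hY₃, hs₃, h₃⟩ := lift g hg
  rw [hs₁, hs₂] at hef
  rw [hs₁, hs₃] at heg
  rw [hs₂, hs₃] at hfg
  push_cast at hY₁ hY₂ hY₃ h₁ h₂ h₃
  obtain ⟨c₁, c₂, c₃, ⟨hc₁, -, h₁⟩, ⟨-, -, h₂⟩, ⟨-, hc₃, h₃⟩, hsorted⟩ :=
    exists_sorted_of_pairwise_crosses
      (P := fun x : Edge => 0 ≤ x.1 ∧ x.2 < 4 * n ∧ (x ∈ E ∨ (x.2 - 4 * n, x.1) ∈ E))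
      ⟨hX₁, hY₁, h₁⟩ ⟨hX₂, hY₂, h₂⟩ ⟨hX₃, hY₃, h₃⟩ hXY₁ hXY₂ hXY₃
      (crosses_of_polyCrosses_intCast hX₁ (by omega) hX₂ (by omega) hXY₁ hXY₂ hef)
      (crosses_of_polyCrosses_intCast hX₁ (by omega) hX₃ (by omega) hXY₁ hXY₃ heg)
      (crosses_of_polyCrosses_intCast hX₂ (by omega) hX₃ (by omega) hXY₂ hXY₃ hfg)
  obtain ⟨h₁₂, h₂₃, h₃₁, h₁₂', h₂₃'⟩ := hsorted
  exact exists_pairwise_crosses_of_chord_lifts hper hlen h₁₂ h₂₃ h₃₁ h₁₂' h₂₃' (by omega) h₁ h₂ h₃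

theorem three_crossing_iff_phi_general (n : ℕ)
    (E : Set Edge) (hval : ValidEdges E) (hper : Periodic n E)
    (hlen : ∀ e ∈ E, e.2 - e.1 ≤ 2 * (n : ℤ)) :
    (∃ S : Finset Edge, ↑S ⊆ E ∧ IsCrossing 3 S) ↔
    (∃ S : Finset (Sym2 (ZMod (4 * n))), ↑S ⊆ phi n E ∧ PolyIsCrossing 3 S) :=
  (exists_card_three_pairwise_iff E).trans <|
    (Iff.intro (exists_polyCrosses_triple_of_crosses_triple hval hlen)
      (exists_crosses_triple_of_polyCrosses_triple hval hper hlen)).trans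
    (exists_card_three_pairwise_iff (phi n E)).symm

/-- An `n`-periodic set `Ē` of edges on `ℤ`, each of length at
most `2n`, contains a 3-crossing if and only if `φ(Ē)` contains a 3-crossing
on the `4n`-gon. -/
theorem three_crossing_iff_phi (n : ℕ) (hn : 1 ≤ n)
    (E : Set Edge) (hval : ValidEdges E) (hper : Periodic n E)
    (hlen : ∀ e ∈ E, e.2 - e.1 ≤ 2 * (n : ℤ)) :
    (∃ S : Finset Edge, ↑S ⊆ E ∧ IsCrossing 3 S) ↔
    (∃ S : Finset (Sym2 (ZMod (4 * n))), ↑S ⊆ phi n E ∧ PolyIsCrossing 3 S) :=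
  three_crossing_iff_phi_general n E hval hper hlen

end Multitriangulation
end
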